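/- The star product f ⋆ h = ∑_{n≥0} (λ^n/n!) y^n (∂_x^n f)(∂_z^n h) on polynomials in x, y, z is associative. -/

import Mathlib

/-!
Expanding `(f ⋆ g) ⋆ h` by the Leibniz rule for `∂ₓᵐ (yⁿ ∂ₓⁿ f ∂_zⁿ g)`, in which `yⁿ` is a
constant for `∂ₓ`, and `f ⋆ (g ⋆ h)` by the Leibniz rule for `∂_zᵐ (yⁿ ∂ₓⁿ g ∂_zⁿ h)`, both sides
become the triple sum
`∑_{a,b,c} λ^(a+b+c)/(a! b! c!) y^(a+b+c) (∂ₓ^(a+b) f) (∂_z^b ∂ₓ^c g) (∂_z^(a+c) h)`: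
the binomial coefficients recombine as `C(a+c, a) λ^(a+c)/(a+c)! = λ^a/a! · λ^c/c!`, and `∂ₓ`
commutes with `∂_z`. Derivatives of order above the total degree vanish, so every sum may be taken
over one common range.
-/

open MvPolynomial

/-- The Heisenberg star product `f ⋆ h = ∑_n (λ^n/n!) yⁿ (∂_xⁿ f)(∂_zⁿ h)` on
polynomials in `x = X 0`, `y = X 1`, `z = X 2` (the sum is finite: terms with
`n > totalDegree f` vanish). -/
noncomputable def hstar (lam : ℝ) (f h : MvPolynomial (Fin 3) ℝ) :
    MvPolynomial (Fin 3) ℝ :=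
  ∑ n ∈ Finset.range (f.totalDegree + 1),
    (lam ^ n / (n.factorial : ℝ)) •
      ((X 1 : MvPolynomial (Fin 3) ℝ) ^ n *
        ((fun p => pderiv 0 p)^[n] f) * ((fun p => pderiv 2 p)^[n] h))

open Finset

namespace Derivation

variable {R A : Type*} [CommSemiring R] [CommSemiring A] [Algebra R A] (D : Derivation R A A)

theorem iterate_map_sum {ι : Type*} (n : ℕ) (s : Finset ι) (F : ι → A) :
    D^[n] (∑ i ∈ s, F i) = ∑ i ∈ s, D^[n] (F i) := by
  simpa only [Module.End.pow_apply, coeFn_coe] using map_sum ((D : Module.End R A) ^ n) F s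

theorem iterate_map_smul (n : ℕ) (r : R) (a : A) : D^[n] (r • a) = r • D^[n] a := by
  simpa only [Module.End.pow_apply, coeFn_coe] using _root_.map_smul ((D : Module.End R A) ^ n) r a

theorem iterate_apply_mul (n : ℕ) (a b : A) :
    D^[n] (a * b) = ∑ ij ∈ antidiagonal n, n.choose ij.1 • (D^[ij.1] a * D^[ij.2] b) := by
  induction n with
  | zero => simp
  | succ n ih =>
    rw [sum_antidiagonal_choose_succ_nsmul (fun i j => D^[i] a * D^[j] b) n]
    simp only [Function.iterate_succ_apply', ih, map_sum, map_nsmul, leibniz, smul_eq_mul,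
      smul_add, sum_add_distrib]
    congr 1
    refine sum_congr rfl fun ij hij => ?_
    rw [n.choose_symm_of_eq_add (mem_antidiagonal.1 hij).symm]
    ring

theorem iterate_apply_mul_of_apply_eq_zero {c : A} (hc : D c = 0) (n : ℕ) (a : A) :
    D^[n] (c * a) = c * D^[n] a := by
  induction n with
  | zero => rfl
  | succ n ih => simp [Function.iterate_succ_apply', ih, leibniz, hc]

end Derivation

theorem Finset.sum_range_sum_antidiagonal {M : Type*} [AddCommMonoid M] {N : ℕ} (G : ℕ → ℕ → M)
    (hG : ∀ a c, N ≤ a + c → G a c = 0) :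
    ∑ m ∈ range N, ∑ ac ∈ antidiagonal m, G ac.1 ac.2 = ∑ a ∈ range N, ∑ c ∈ range N, G a c := by
  rw [← sum_product', ← sum_filter_of_ne (f := fun ac : ℕ × ℕ => G ac.1 ac.2)
    (p := fun ac => ac.1 + ac.2 < N) fun ac _ hac => not_le.mp fun hN => hac (hG _ _ hN),
    ← sum_fiberwise_of_maps_to (t := range N) (g := fun ac => ac.1 + ac.2)
      (fun ac hac => mem_range.mpr (mem_filter.mp hac).2) (fun ac : ℕ × ℕ => G ac.1 ac.2)]
  refine sum_congr rfl fun m hm => sum_congr ?_ fun _ _ => rfl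
  ext ⟨a, c⟩
  simp only [HasAntidiagonal.mem_antidiagonal, mem_filter, mem_product, mem_range] at hm ⊢
  omega

theorem pow_div_factorial_mul_choose {K : Type*} [Field K] [CharZero K] (x : K) (i j : ℕ) :
    x ^ (i + j) / (i + j).factorial * (i + j).choose i =
      x ^ i / i.factorial * (x ^ j / j.factorial) := by
  have : ((i + j).factorial : K) ≠ 0 := Nat.cast_ne_zero.mpr (Nat.factorial_ne_zero _)
  rw [Nat.cast_add_choose, pow_add]
  field_simp

namespace MvPolynomial

section CommSemiring

variable {σ R : Type*} [CommSemiring R]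

theorem totalDegree_pderiv_le (i : σ) (p : MvPolynomial σ R) :
    (pderiv i p).totalDegree ≤ p.totalDegree - 1 := by
  classical
  refine Finset.sup_le fun m hm => ?_
  rw [mem_support_iff, coeff_pderiv] at hm
  have := le_totalDegree (mem_support_iff.mpr (left_ne_zero_of_mul hm))
  rw [Finsupp.sum_add_index' (fun _ => rfl) (fun _ _ _ => rfl),
    Finsupp.sum_single_index rfl] at this
  omega

theorem totalDegree_iterate_pderiv_le (i : σ) (n : ℕ) (p : MvPolynomial σ R) :
    ((pderiv i)^[n] p).totalDegree ≤ p.totalDegree - n := by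
  induction n with
  | zero => simp
  | succ n ih =>
    rw [Function.iterate_succ_apply']
    exact (totalDegree_pderiv_le i _).trans (by omega)

theorem iterate_pderiv_eq_zero_of_totalDegree_lt {i : σ} {n : ℕ} {p : MvPolynomial σ R}
    (h : p.totalDegree < n) : (pderiv i)^[n] p = 0 := by
  obtain ⟨k, rfl⟩ := Nat.exists_eq_add_of_lt h
  have hconst : ((pderiv i)^[p.totalDegree + k] p).totalDegree = 0 := by
    have := totalDegree_iterate_pderiv_le i (p.totalDegree + k) p
    omega
  rw [Function.iterate_succ_apply', totalDegree_eq_zero_iff_eq_C.mp hconst, pderiv_C]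

theorem pderiv_X_pow_of_ne {i j : σ} (h : j ≠ i) (n : ℕ) :
    pderiv i (X j ^ n : MvPolynomial σ R) = 0 := by
  rw [pderiv_pow, pderiv_X_of_ne h, mul_zero]

end CommSemiring

theorem pderiv_pderiv_comm {σ R : Type*} [CommRing R] (i j : σ) (p : MvPolynomial σ R) :
    pderiv i (pderiv j p) = pderiv j (pderiv i p) := by
  classical
  suffices ⁅pderiv i, pderiv j⁆ = (0 : Derivation R (MvPolynomial σ R) (MvPolynomial σ R)) by
    rw [← sub_eq_zero, ← Derivation.commutator_apply, this, Derivation.zero_apply]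
  refine derivation_ext fun k => ?_
  simp [Derivation.commutator_apply, pderiv_X, Pi.single_apply, apply_ite]

theorem iterate_pderiv_comm {σ R : Type*} [CommRing R] (i j : σ) (a b : ℕ)
    (p : MvPolynomial σ R) :
    (pderiv i)^[a] ((pderiv j)^[b] p) = (pderiv j)^[b] ((pderiv i)^[a] p) :=
  Function.Commute.iterate_iterate (pderiv_pderiv_comm i j) a b p

end MvPolynomial

section HeisenbergStar

variable (lam : ℝ)

noncomputable def hstarTerm (n : ℕ) (f h : MvPolynomial (Fin 3) ℝ) : MvPolynomial (Fin 3) ℝ :=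
  (lam ^ n / n.factorial) • (X 1 ^ n * (pderiv 0)^[n] f * (pderiv 2)^[n] h)

variable (f g h : MvPolynomial (Fin 3) ℝ)

theorem hstar_eq_sum_range {N : ℕ} (hN : f.totalDegree < N) :
    hstar lam f h = ∑ n ∈ range N, hstarTerm lam n f h := by
  change ∑ n ∈ range (f.totalDegree + 1), hstarTerm lam n f h = _
  refine sum_subset (range_subset_range.mpr hN) fun n _ hn => ?_
  rw [mem_range, not_lt] at hn
  rw [hstarTerm, iterate_pderiv_eq_zero_of_totalDegree_lt hn, mul_zero, zero_mul, smul_zero]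

theorem totalDegree_hstar_le :
    (hstar lam f g).totalDegree ≤ f.totalDegree + g.totalDegree := by
  rw [hstar_eq_sum_range lam f g (Nat.lt_succ_self _)]
  refine totalDegree_finsetSum_le fun n hn => ?_
  have hnf := mem_range_succ_iff.mp hn
  have hf := totalDegree_iterate_pderiv_le 0 n f
  have hg := totalDegree_iterate_pderiv_le 2 n g
  refine (totalDegree_smul_le _ _).trans <| (totalDegree_mul _ _).trans ?_
  grw [totalDegree_mul, totalDegree_X_pow, hf, hg]
  omega

theorem hstarTerm_sum_left {ι : Type*} (n : ℕ) (s : Finset ι) (F : ι → MvPolynomial (Fin 3) ℝ) :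
    hstarTerm lam n (∑ i ∈ s, F i) h = ∑ i ∈ s, hstarTerm lam n (F i) h := by
  simp only [hstarTerm, Derivation.iterate_map_sum, mul_sum, sum_mul, smul_sum]

theorem hstarTerm_sum_right {ι : Type*} (n : ℕ) (s : Finset ι) (F : ι → MvPolynomial (Fin 3) ℝ) :
    hstarTerm lam n f (∑ i ∈ s, F i) = ∑ i ∈ s, hstarTerm lam n f (F i) := by
  simp only [hstarTerm, Derivation.iterate_map_sum, mul_sum, smul_sum]

noncomputable def hstarTriple (a b c : ℕ) : MvPolynomial (Fin 3) ℝ :=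
  (lam ^ a / a.factorial * (lam ^ b / b.factorial) * (lam ^ c / c.factorial)) •
    (X 1 ^ (a + b + c) *
      ((pderiv 0)^[a + b] f * (pderiv 2)^[b] ((pderiv 0)^[c] g) * (pderiv 2)^[a + c] h))

theorem hstarTriple_eq_zero_of_totalDegree_lt_left {a b c : ℕ} (hf : f.totalDegree < a + b) :
    hstarTriple lam f g h a b c = 0 := by
  rw [hstarTriple, iterate_pderiv_eq_zero_of_totalDegree_lt hf, zero_mul, zero_mul, mul_zero,
    smul_zero]

theorem hstarTriple_eq_zero_of_totalDegree_lt_right {a b c : ℕ} (hh : h.totalDegree < a + c) :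
    hstarTriple lam f g h a b c = 0 := by
  rw [hstarTriple, iterate_pderiv_eq_zero_of_totalDegree_lt hh, mul_zero, mul_zero, smul_zero]

theorem hstarTerm_hstarTerm_left (m b : ℕ) :
    hstarTerm lam m (hstarTerm lam b f g) h =
      ∑ ac ∈ antidiagonal m, hstarTriple lam f g h ac.1 b ac.2 := by
  rw [hstarTerm, hstarTerm, Derivation.iterate_map_smul, mul_assoc (X 1 ^ b),
    Derivation.iterate_apply_mul_of_apply_eq_zero _ (pderiv_X_pow_of_ne (by decide) b),
    Derivation.iterate_apply_mul]
  simp only [mul_sum, sum_mul, smul_sum]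
  refine sum_congr rfl fun ⟨a, c⟩ hac => ?_
  obtain rfl : a + c = m := mem_antidiagonal.mp hac
  dsimp only
  rw [hstarTriple, ← Function.iterate_add_apply, iterate_pderiv_comm]
  simp only [← Nat.cast_smul_eq_nsmul ℝ, mul_smul_comm, smul_mul_assoc, smul_smul]
  congr 1
  · linear_combination (lam ^ b / b.factorial) * pow_div_factorial_mul_choose lam a c
  · ring

theorem hstarTerm_hstarTerm_right (m c : ℕ) :
    hstarTerm lam m f (hstarTerm lam c g h) =
      ∑ ab ∈ antidiagonal m, hstarTriple lam f g h ab.1 ab.2 c := by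
  rw [hstarTerm, hstarTerm, Derivation.iterate_map_smul, mul_assoc (X 1 ^ c),
    Derivation.iterate_apply_mul_of_apply_eq_zero _ (pderiv_X_pow_of_ne (by decide) c),
    Derivation.iterate_apply_mul, ← Nat.sum_antidiagonal_swap]
  simp only [mul_sum, smul_sum]
  refine sum_congr rfl fun ⟨a, b⟩ hab => ?_
  obtain rfl : a + b = m := mem_antidiagonal.mp hab
  dsimp only [Prod.swap]
  rw [hstarTriple, ← Function.iterate_add_apply, ← Nat.choose_symm_add]
  simp only [← Nat.cast_smul_eq_nsmul ℝ, mul_smul_comm, smul_smul]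
  congr 1
  · linear_combination (lam ^ c / c.factorial) * pow_div_factorial_mul_choose lam a b
  · ring

end HeisenbergStar

/-- The Heisenberg star product is associative. -/
theorem stmt_9 (lam : ℝ) (f g h : MvPolynomial (Fin 3) ℝ) :
    hstar lam (hstar lam f g) h = hstar lam f (hstar lam g h) := by
  set N := f.totalDegree + g.totalDegree + h.totalDegree + 1
  have hfg := totalDegree_hstar_le lam f g
  have hleft (b : ℕ) : ∑ m ∈ range N, ∑ ac ∈ antidiagonal m, hstarTriple lam f g h ac.1 b ac.2 =
      ∑ a ∈ range N, ∑ c ∈ range N, hstarTriple lam f g h a b c :=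
    sum_range_sum_antidiagonal (fun a c => hstarTriple lam f g h a b c) fun a c hac =>
      hstarTriple_eq_zero_of_totalDegree_lt_right lam f g h (by omega)
  have hright (c : ℕ) : ∑ m ∈ range N, ∑ ab ∈ antidiagonal m, hstarTriple lam f g h ab.1 ab.2 c =
      ∑ a ∈ range N, ∑ b ∈ range N, hstarTriple lam f g h a b c :=
    sum_range_sum_antidiagonal (fun a b => hstarTriple lam f g h a b c) fun a b hab =>
      hstarTriple_eq_zero_of_totalDegree_lt_left lam f g h (by omega)
  rw [hstar_eq_sum_range lam _ h (N := N) (by omega),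
    hstar_eq_sum_range lam f g (N := N) (by omega),
    hstar_eq_sum_range lam f _ (N := N) (by omega),
    hstar_eq_sum_range lam g h (N := N) (by omega)]
  simp only [hstarTerm_sum_left, hstarTerm_sum_right, hstarTerm_hstarTerm_left,
    hstarTerm_hstarTerm_right]
  rw [sum_comm, sum_congr rfl fun b _ => hleft b]
  conv_rhs => rw [sum_comm, sum_congr rfl fun c _ => hright c]
  exact (sum_comm.trans (sum_congr rfl fun _ _ => sum_comm)).trans sum_comm
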